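/- Let M and M' be fuzzy Kripke models over a linear residuated lattice L. If Z₁ and Z₂ are fuzzy bisimulations between M and M', then their pointwise join Z₁ ∪ Z₂, defined by (Z₁ ∪ Z₂)(x,x') = Z₁(x,x') ∨ Z₂(x,x'), is also a fuzzy bisimulation between M and M'. -/

import Mathlib

class ResLat (α : Type*) extends Lattice α, CommMonoid α, BoundedOrder α where
  rimp : α → α → α
  adj : ∀ x y z : α, x * y ≤ z ↔ x ≤ rimp y z
  one_eq_top : (1 : α) = ⊤

/-- The biresiduum `(a → b) ⊓ (b → a)`. -/
def bires {α : Type*} [ResLat α] (a b : α) : α := ResLat.rimp a b ⊓ ResLat.rimp b a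

/-- A fuzzy Kripke model over actions `A`, propositions `P`, with domain `W`. -/
structure FKM (A P W : Type*) (α : Type*) where
  prop : P → W → α
  rel : A → W → W → α

/-- `Z` is a fuzzy bisimulation between `M` and `M'`. -/
def IsFuzzyBisim {A P W W' α : Type*} [ResLat α]
    (M : FKM A P W α) (M' : FKM A P W' α) (Z : W → W' → α) : Prop :=
  (∀ (p : P) (x : W) (x' : W'), Z x x' ≤ bires (M.prop p x) (M'.prop p x')) ∧
  (∀ (ρ : A) (x y : W) (x' : W'), ∃ y' : W',
      Z x x' * M.rel ρ x y ≤ M'.rel ρ x' y' * Z y y') ∧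
  (∀ (ρ : A) (x : W) (x' y' : W'), ∃ y : W,
      Z x x' * M'.rel ρ x' y' ≤ M.rel ρ x y * Z y y')

/-!
Since `L` is linear, the join at each pair `(x, x')` equals `Z₁ x x'` or `Z₂ x x'`; the forth and
back conditions at that pair are then inherited from whichever bisimulation attains the join,
using monotonicity of `⊗` (a consequence of residuation) to pass from `Zᵢ y y'` to the join.
-/

theorem ResLat.mul_le_mul_of_le_left {α : Type*} [ResLat α] {a b : α} (h : a ≤ b) (c : α) :
    a * c ≤ b * c :=
  (ResLat.adj a c (b * c)).mpr (h.trans ((ResLat.adj b c (b * c)).mp le_rfl))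

instance ResLat.toIsOrderedMonoid {α : Type*} [ResLat α] : IsOrderedMonoid α where
  mul_le_mul_left _ _ h c := ResLat.mul_le_mul_of_le_left h c
  mul_le_mul_right a b h c := by
    simpa only [mul_comm c] using ResLat.mul_le_mul_of_le_left h c

namespace IsFuzzyBisim

variable {A P W W' α : Type*} [ResLat α] {M : FKM A P W α} {M' : FKM A P W' α}
  {Z Z' : W → W' → α}

theorem forth_of_le (hZ : IsFuzzyBisim M M' Z) (hle : ∀ y y', Z y y' ≤ Z' y y') {x : W} {x' : W'}
    (hx : Z' x x' ≤ Z x x') (ρ : A) (y : W) :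
    ∃ y', Z' x x' * M.rel ρ x y ≤ M'.rel ρ x' y' * Z' y y' := by
  obtain ⟨y', hy'⟩ := hZ.2.1 ρ x y x'
  exact ⟨y', calc
    Z' x x' * M.rel ρ x y ≤ Z x x' * M.rel ρ x y := mul_le_mul_left hx _
    _ ≤ M'.rel ρ x' y' * Z y y' := hy'
    _ ≤ M'.rel ρ x' y' * Z' y y' := mul_le_mul_right (hle y y') _⟩

theorem back_of_le (hZ : IsFuzzyBisim M M' Z) (hle : ∀ y y', Z y y' ≤ Z' y y') {x : W} {x' : W'}
    (hx : Z' x x' ≤ Z x x') (ρ : A) (y' : W') :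
    ∃ y, Z' x x' * M'.rel ρ x' y' ≤ M.rel ρ x y * Z' y y' := by
  obtain ⟨y, hy⟩ := hZ.2.2 ρ x x' y'
  exact ⟨y, calc
    Z' x x' * M'.rel ρ x' y' ≤ Z x x' * M'.rel ρ x' y' := mul_le_mul_left hx _
    _ ≤ M.rel ρ x y * Z y y' := hy
    _ ≤ M.rel ρ x y * Z' y y' := mul_le_mul_right (hle y y') _⟩

end IsFuzzyBisim

theorem stmt19_general {A P W W' α : Type*} [ResLat α]
    (linear : ∀ a b : α, a ≤ b ∨ b ≤ a)
    (M : FKM A P W α) (M' : FKM A P W' α)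
    (Z₁ Z₂ : W → W' → α)
    (h₁ : IsFuzzyBisim M M' Z₁) (h₂ : IsFuzzyBisim M M' Z₂) :
    IsFuzzyBisim M M' (fun x x' => Z₁ x x' ⊔ Z₂ x x') := by
  have le₁ : ∀ y y', Z₁ y y' ≤ Z₁ y y' ⊔ Z₂ y y' := fun _ _ => le_sup_left
  have le₂ : ∀ y y', Z₂ y y' ≤ Z₁ y y' ⊔ Z₂ y y' := fun _ _ => le_sup_right
  refine ⟨fun p x x' => sup_le (h₁.1 p x x') (h₂.1 p x x'), ?_, ?_⟩
  · intro ρ x y x'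
    rcases linear (Z₁ x x') (Z₂ x x') with h | h
    · exact h₂.forth_of_le le₂ (sup_le h le_rfl) ρ y
    · exact h₁.forth_of_le le₁ (sup_le le_rfl h) ρ y
  · intro ρ x x' y'
    rcases linear (Z₁ x x') (Z₂ x x') with h | h
    · exact h₂.back_of_le le₂ (sup_le h le_rfl) ρ y'
    · exact h₁.back_of_le le₁ (sup_le le_rfl h) ρ y'

theorem stmt19 {A P W W' α : Type*} [ResLat α]
    [Nonempty W] [Nonempty W']
    (linear : ∀ a b : α, a ≤ b ∨ b ≤ a)
    (M : FKM A P W α) (M' : FKM A P W' α)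
    (Z₁ Z₂ : W → W' → α)
    (h₁ : IsFuzzyBisim M M' Z₁) (h₂ : IsFuzzyBisim M M' Z₂) :
    IsFuzzyBisim M M' (fun x x' => Z₁ x x' ⊔ Z₂ x x') :=
  stmt19_general linear M M' Z₁ Z₂ h₁ h₂
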